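/- arXiv:1306.2555 — 5 statements merged into one kernel-verified Lean document; each statement's English description precedes it below -/
import Mathlib

section
/- Let P be an involution (P² = id) on a real vector space Z, let ξ₁, ξ₂, ξ₃ ∈ Z and η¹, η², η³ ∈ Z* satisfy: P(ξ₁) = (α/β)(c₁ + d₁e²) ξ₂, P(ξ₂) = (β/α)(c₂ + d₂e²) ξ₁, P(ξ₃) = ξ₃; η¹(ξ₁) = αγe², η²(ξ₂) = βλe⁴, η³(ξ₃) = κρτ, ηᵃ(ξᵇ) = 0 for a ≠ b; η¹∘P = (γ/(λe²))(c₂ + d₂e²) η², η²∘P = (λe²/γ)(c₁ + d₁e²) η¹, η³∘P = η³ (where e² = ‖E‖², and all Greek letters are nonzero reals, and c₁c₂ = 1, (c₁+d₁e²)(c₂+d₂e²) = 1). Define p = P − η¹⊗ξ₂ − η²⊗ξ₁ − η³⊗ξ₃. Then p² = id − (β/α(c₂+d₂e²) + λe²/γ(c₁+d₁e²) − βλe⁴) η¹⊗ξ₁ − (α/β(c₁+d₁e²) + γ/(λe²)(c₂+d₂e²) − αγe²) η²⊗ξ₂ + (κρτ − 2) η³⊗ξ₃. -/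
/-- Equation (3.24) of Lemma 2: the square of
`p = P − η¹⊗ξ₂ − η²⊗ξ₁ − η³⊗ξ₃`. -/
theorem stmt5
    {Z : Type*} [AddCommGroup Z] [Module ℝ Z]
    (P : Z →ₗ[ℝ] Z) (hP : ∀ X, P (P X) = X)
    (ξ₁ ξ₂ ξ₃ : Z) (η₁ η₂ η₃ : Z →ₗ[ℝ] ℝ)
    (α β γ κ lam ρ τ e c₁ c₂ d₁ d₂ : ℝ)
    (hα : α ≠ 0) (hβ : β ≠ 0) (hγ : γ ≠ 0) (hκ : κ ≠ 0) (hlam : lam ≠ 0)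
    (hρ : ρ ≠ 0) (he : e ≠ 0) (hτ : τ ≠ 0)
    (hc : c₁ * c₂ = 1) (hcd : (c₁ + d₁ * e ^ 2) * (c₂ + d₂ * e ^ 2) = 1)
    (hPξ₁ : P ξ₁ = (α / β * (c₁ + d₁ * e ^ 2)) • ξ₂)
    (hPξ₂ : P ξ₂ = (β / α * (c₂ + d₂ * e ^ 2)) • ξ₁)
    (hPξ₃ : P ξ₃ = ξ₃)
    (h11 : η₁ ξ₁ = α * γ * e ^ 2) (h22 : η₂ ξ₂ = β * lam * e ^ 4)
    (h33 : η₃ ξ₃ = κ * ρ * τ)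
    (h12 : η₁ ξ₂ = 0) (h13 : η₁ ξ₃ = 0) (h21 : η₂ ξ₁ = 0)
    (h23 : η₂ ξ₃ = 0) (h31 : η₃ ξ₁ = 0) (h32 : η₃ ξ₂ = 0)
    (hη₁P : ∀ X, η₁ (P X) = γ / (lam * e ^ 2) * (c₂ + d₂ * e ^ 2) * η₂ X)
    (hη₂P : ∀ X, η₂ (P X) = lam * e ^ 2 / γ * (c₁ + d₁ * e ^ 2) * η₁ X)
    (hη₃P : ∀ X, η₃ (P X) = η₃ X)
    (p : Z → Z)
    (hp : ∀ X, p X = P X - η₁ X • ξ₂ - η₂ X • ξ₁ - η₃ X • ξ₃) :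
    ∀ X, p (p X) = X
      - ((β / α * (c₂ + d₂ * e ^ 2) + lam * e ^ 2 / γ * (c₁ + d₁ * e ^ 2)
          - β * lam * e ^ 4) * η₁ X) • ξ₁
      - ((α / β * (c₁ + d₁ * e ^ 2) + γ / (lam * e ^ 2) * (c₂ + d₂ * e ^ 2)
          - α * γ * e ^ 2) * η₂ X) • ξ₂
      + ((κ * ρ * τ - 2) * η₃ X) • ξ₃ := by
  intro X
  rw [hp, hp]
  simp only [map_sub, map_smul, hPξ₁, hPξ₂, hPξ₃, hη₁P, hη₂P, hη₃P,
    h11, h22, h33, h12, h13, h21, h23, h31, h32, smul_smul, hP]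
  match_scalars <;> field_simp <;> ring_nf <;>
    nlinarith [hcd, hc, sq_nonneg e, mul_pos, hcd.symm]
end

section
/- Under the hypotheses of the previous setup, if additionally αγe² = 1, βλe⁴ = 1, κρτ = 1, and λ = (γ/e²)(c₂ + d₂e²), then p² = id − η¹⊗ξ₁ − η²⊗ξ₂ − η³⊗ξ₃, p(ξₖ) = 0 and ηᵏ(ξₗ) = δᵏₗ and ηᵏ∘p = 0 for k, l = 1,2,3; in particular p³ = p. -/
/-- Lemma 3 / Theorem 3 (first part): under the conditions (3.25) the triple
`(p, (ξₖ), (ηᵏ))` satisfies the framed `f(3,−1)`-structure identities (3.26),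
and in particular `p³ = p`. -/
theorem stmt6
    {Z : Type*} [AddCommGroup Z] [Module ℝ Z]
    (P : Z →ₗ[ℝ] Z) (hP : ∀ X, P (P X) = X)
    (ξ₁ ξ₂ ξ₃ : Z) (η₁ η₂ η₃ : Z →ₗ[ℝ] ℝ)
    (α β γ κ lam ρ τ e c₁ c₂ d₁ d₂ : ℝ)
    (hα : α ≠ 0) (hβ : β ≠ 0) (hγ : γ ≠ 0) (hκ : κ ≠ 0) (hlam : lam ≠ 0)
    (hρ : ρ ≠ 0) (he : e ≠ 0) (hτ : τ ≠ 0)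
    (hc : c₁ * c₂ = 1) (hcd : (c₁ + d₁ * e ^ 2) * (c₂ + d₂ * e ^ 2) = 1)
    (hPξ₁ : P ξ₁ = (α / β * (c₁ + d₁ * e ^ 2)) • ξ₂)
    (hPξ₂ : P ξ₂ = (β / α * (c₂ + d₂ * e ^ 2)) • ξ₁)
    (hPξ₃ : P ξ₃ = ξ₃)
    (h11 : η₁ ξ₁ = α * γ * e ^ 2) (h22 : η₂ ξ₂ = β * lam * e ^ 4)
    (h33 : η₃ ξ₃ = κ * ρ * τ)
    (h12 : η₁ ξ₂ = 0) (h13 : η₁ ξ₃ = 0) (h21 : η₂ ξ₁ = 0)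
    (h23 : η₂ ξ₃ = 0) (h31 : η₃ ξ₁ = 0) (h32 : η₃ ξ₂ = 0)
    (hη₁P : ∀ X, η₁ (P X) = γ / (lam * e ^ 2) * (c₂ + d₂ * e ^ 2) * η₂ X)
    (hη₂P : ∀ X, η₂ (P X) = lam * e ^ 2 / γ * (c₁ + d₁ * e ^ 2) * η₁ X)
    (hη₃P : ∀ X, η₃ (P X) = η₃ X)
    (p : Z → Z)
    (hp : ∀ X, p X = P X - η₁ X • ξ₂ - η₂ X • ξ₁ - η₃ X • ξ₃)
    -- conditions (3.25)
    (e1 : α * γ * e ^ 2 = 1) (e2 : β * lam * e ^ 4 = 1) (e3 : κ * ρ * τ = 1)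
    (e4 : lam = γ / e ^ 2 * (c₂ + d₂ * e ^ 2)) :
    (∀ X, p (p X) = X - η₁ X • ξ₁ - η₂ X • ξ₂ - η₃ X • ξ₃) ∧
    (p ξ₁ = 0 ∧ p ξ₂ = 0 ∧ p ξ₃ = 0) ∧
    (η₁ ξ₁ = 1 ∧ η₂ ξ₂ = 1 ∧ η₃ ξ₃ = 1 ∧
      η₁ ξ₂ = 0 ∧ η₁ ξ₃ = 0 ∧ η₂ ξ₁ = 0 ∧ η₂ ξ₃ = 0 ∧ η₃ ξ₁ = 0 ∧ η₃ ξ₂ = 0) ∧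
    (∀ X, η₁ (p X) = 0 ∧ η₂ (p X) = 0 ∧ η₃ (p X) = 0) ∧
    (∀ X, p (p (p X)) = p X) := by

  have he2 : e ^ 2 ≠ 0 := pow_ne_zero 2 he
  have e4' : lam * e ^ 2 = γ * (c₂ + d₂ * e ^ 2) := by
    rw [e4]; field_simp
  have hβα : β * (c₂ + d₂ * e ^ 2) = α := by
    have h : (β * (c₂ + d₂ * e ^ 2)) * (γ * e ^ 2) = α * (γ * e ^ 2) := by
      linear_combination e2 - e1 - β * e ^ 2 * e4'
    exact mul_right_cancel₀ (mul_ne_zero hγ he2) h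
  have hαβ : α / β = c₂ + d₂ * e ^ 2 := by
    rw [div_eq_iff hβ]; linear_combination -hβα
  have k1 : α / β * (c₁ + d₁ * e ^ 2) = 1 := by
    rw [hαβ, mul_comm]; exact hcd
  have k2 : β / α * (c₂ + d₂ * e ^ 2) = 1 := by
    rw [div_mul_eq_mul_div, div_eq_one_iff_eq hα]; linear_combination hβα
  have k3 : γ / (lam * e ^ 2) * (c₂ + d₂ * e ^ 2) = 1 := by
    rw [div_mul_eq_mul_div, div_eq_one_iff_eq (mul_ne_zero hlam he2)]
    linear_combination -e4'
  have k4 : lam * e ^ 2 / γ * (c₁ + d₁ * e ^ 2) = 1 := by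
    rw [div_mul_eq_mul_div, div_eq_one_iff_eq hγ]
    linear_combination (c₁ + d₁ * e ^ 2) * e4' + γ * hcd
  have h11' : η₁ ξ₁ = 1 := h11.trans e1
  have h22' : η₂ ξ₂ = 1 := h22.trans e2
  have h33' : η₃ ξ₃ = 1 := h33.trans e3
  have hη1p : ∀ X, η₁ (p X) = 0 := by
    intro X
    rw [hp X]
    simp only [map_sub, map_smul, smul_eq_mul, hη₁P, h11', h12, h13]
    linear_combination η₂ X * k3
  have hη2p : ∀ X, η₂ (p X) = 0 := by
    intro X
    rw [hp X]
    simp only [map_sub, map_smul, smul_eq_mul, hη₂P, h22', h21, h23]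
    linear_combination η₁ X * k4
  have hη3p : ∀ X, η₃ (p X) = 0 := by
    intro X
    rw [hp X]
    simp only [map_sub, map_smul, smul_eq_mul, hη₃P, h33', h31, h32]
    ring
  have hpp : ∀ X, p (p X) = X - η₁ X • ξ₁ - η₂ X • ξ₂ - η₃ X • ξ₃ := by
    intro X
    rw [hp (p X), hη1p X, hη2p X, hη3p X, zero_smul, zero_smul, zero_smul,
      sub_zero, sub_zero, sub_zero, hp X]
    simp only [map_sub, map_smul, hP, hPξ₁, hPξ₂, hPξ₃, smul_smul, k1, k2, one_smul]
    try abel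
  refine ⟨hpp, ⟨?_, ?_, ?_⟩, ⟨h11', h22', h33', h12, h13, h21, h23, h31, h32⟩,
    fun X => ⟨hη1p X, hη2p X, hη3p X⟩, fun X => ?_⟩
  · rw [hp ξ₁, hPξ₁, h11', h21, h31, k1]
    simp
  · rw [hp ξ₂, hPξ₂, h22', h12, h32, k2]
    simp
  · rw [hp ξ₃, hPξ₃, h33', h13, h23]
    simp
  · rw [hpp (p X), hη1p X, hη2p X, hη3p X, zero_smul, zero_smul, zero_smul,
      sub_zero, sub_zero, sub_zero]
end

section
/- Under the hypotheses making p³ = p as above (conditions (3.25)), the kernel of p equals the span of {ξ₁, ξ₂, ξ₃}; hence if ξ₁, ξ₂, ξ₃ are linearly independent and Z has finite dimension N, then p has rank N − 3. -/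
/-- Lemma 3 (second part): `ker p = span{ξ₁, ξ₂, ξ₃}`, hence if the `ξ`'s are
linearly independent, `p` has rank `dim Z − 3`. -/
theorem stmt7
    {Z : Type*} [AddCommGroup Z] [Module ℝ Z] [FiniteDimensional ℝ Z]
    (P : Z →ₗ[ℝ] Z) (hP : ∀ X, P (P X) = X)
    (ξ₁ ξ₂ ξ₃ : Z) (η₁ η₂ η₃ : Z →ₗ[ℝ] ℝ)
    (α β e c₁ c₂ d₁ d₂ : ℝ) (hα : α ≠ 0) (hβ : β ≠ 0)
    (hcd : (c₁ + d₁ * e ^ 2) * (c₂ + d₂ * e ^ 2) = 1)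
    (hPξ₁ : P ξ₁ = (α / β * (c₁ + d₁ * e ^ 2)) • ξ₂)
    (hPξ₂ : P ξ₂ = (β / α * (c₂ + d₂ * e ^ 2)) • ξ₁)
    (hPξ₃ : P ξ₃ = ξ₃)
    (h11 : η₁ ξ₁ = 1) (h22 : η₂ ξ₂ = 1) (h33 : η₃ ξ₃ = 1)
    (h12 : η₁ ξ₂ = 0) (h13 : η₁ ξ₃ = 0) (h21 : η₂ ξ₁ = 0)
    (h23 : η₂ ξ₃ = 0) (h31 : η₃ ξ₁ = 0) (h32 : η₃ ξ₂ = 0)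
    (p : Z →ₗ[ℝ] Z)
    (hp : ∀ X, p X = P X - η₁ X • ξ₂ - η₂ X • ξ₁ - η₃ X • ξ₃)
    (hpξ : p ξ₁ = 0 ∧ p ξ₂ = 0 ∧ p ξ₃ = 0) :
    LinearMap.ker p = Submodule.span ℝ {ξ₁, ξ₂, ξ₃} ∧
    (LinearIndependent ℝ ![ξ₁, ξ₂, ξ₃] →
      Module.finrank ℝ (LinearMap.range p) = Module.finrank ℝ Z - 3) := by
  obtain ⟨hp1, hp2, hp3⟩ := hpξ
  have hmem : ∀ i ∈ ({ξ₁, ξ₂, ξ₃} : Set Z), i ∈ Submodule.span ℝ ({ξ₁, ξ₂, ξ₃} : Set Z) :=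
    fun i hi => Submodule.subset_span hi
  have hker : LinearMap.ker p = Submodule.span ℝ ({ξ₁, ξ₂, ξ₃} : Set Z) := by
    apply le_antisymm
    · intro X hX
      have h0 : p X = 0 := hX
      have h1 : P X - η₁ X • ξ₂ - η₂ X • ξ₁ - η₃ X • ξ₃ = 0 := (hp X).symm.trans h0
      have hPX : P X = η₁ X • ξ₂ + η₂ X • ξ₁ + η₃ X • ξ₃ := by
        linear_combination (norm := module) h1
      have hXeq : X = η₁ X • P ξ₂ + η₂ X • P ξ₁ + η₃ X • P ξ₃ := by
        conv_lhs => rw [← hP X]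
        rw [hPX]; simp [map_add, map_smul]
      rw [hXeq, hPξ₁, hPξ₂, hPξ₃]
      exact Submodule.add_mem _ (Submodule.add_mem _
        (Submodule.smul_mem _ _ (Submodule.smul_mem _ _ (hmem ξ₁ (by simp))))
        (Submodule.smul_mem _ _ (Submodule.smul_mem _ _ (hmem ξ₂ (by simp)))))
        (Submodule.smul_mem _ _ (hmem ξ₃ (by simp)))
    · rw [Submodule.span_le]
      rintro x (rfl | rfl | rfl) <;> simp_all [LinearMap.mem_ker]
  refine ⟨hker, fun hli => ?_⟩
  have hrange : Set.range ![ξ₁, ξ₂, ξ₃] = ({ξ₁, ξ₂, ξ₃} : Set Z) := by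
    ext x
    simp [Fin.exists_fin_succ, Matrix.cons_val_zero, Matrix.cons_val_one, Matrix.cons_val_fin_one, or_assoc, eq_comm]
    tauto
  have h3 : Module.finrank ℝ (LinearMap.ker p) = 3 := by
    rw [hker, ← hrange, finrank_span_eq_card hli]
    simp
  have := LinearMap.finrank_range_add_finrank_ker p
  omega
end

section
/- Let g be a positive definite inner product on ℝⁿ with n ≥ 2, r > 0 and a = 1/(k r²) for some k ≠ 0. Then the identity −(1/(2r²))[g^{jl}(g_{tm}δ^r_i − g_{im}δ^r_t + 2g_{it}δ^r_m) + g_{it}(g^{jr}δ^l_m − g^{lr}δ^j_m)] + (1/r⁴) δ^r_m δ^l_t δ^j_i = 0 cannot hold for all index values. In particular, contracting suitably (e.g. setting i = t, j = l, m = r and summing) leads to a contradiction for any n ≥ 2 and r > 0. -/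
/-! Take two distinct indices `i ≠ j` and evaluate at `t = i`, `l = m = s = j`. Every Kronecker
term vanishes or cancels except `2 g_{it} δ^s_m`, so the identity reduces to
`-(1/r²) g^{jj} g_{ii} = 0`, which is impossible since both `g` and `g⁻¹` are positive
definite. -/

theorem stmt13_general (n : ℕ) (hn : 2 ≤ n)
    (g : Matrix (Fin n) (Fin n) ℝ) (hg : g.PosDef)
    (r : ℝ) (hr : 0 < r) :
    ¬ (∀ i t j l m s : Fin n,
      -(1 / (2 * r ^ 2)) *
        (g⁻¹ j l * (g t m * (if s = i then (1:ℝ) else 0)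
            - g i m * (if s = t then (1:ℝ) else 0)
            + 2 * g i t * (if s = m then (1:ℝ) else 0))
          + g i t * (g⁻¹ j s * (if l = m then (1:ℝ) else 0)
            - g⁻¹ l s * (if j = m then (1:ℝ) else 0)))
      + (1 / r ^ 4) * (if s = m then (1:ℝ) else 0)
          * (if l = t then (1:ℝ) else 0) * (if j = i then (1:ℝ) else 0) = 0) := by
  intro h
  have : Nontrivial (Fin n) := Fin.nontrivial_iff_two_le.mpr hn
  obtain ⟨j, i, hji⟩ := exists_pair_ne (Fin n)
  have key := h i i j j j j
  simp only [↓reduceIte, if_neg hji, mul_zero, mul_one, sub_self, zero_add, add_zero] at key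
  have hgi : 0 < g i i := hg.diag_pos
  have hgj : 0 < g⁻¹ j j := hg.inv.diag_pos
  have hreduced : g⁻¹ j j * g i i / r ^ 2 = 0 := by
    linear_combination -key
  exact absurd hreduced (by positivity)

/-- The final contradiction in the proof of Theorem 7: the index identity
obtained at the point `t^i_j = δ^i_j` cannot hold for all index values. -/
theorem stmt13 (n : ℕ) (hn : 2 ≤ n)
    (g : Matrix (Fin n) (Fin n) ℝ) (hg : g.PosDef)
    (r k : ℝ) (hr : 0 < r) (hk : k ≠ 0) (a : ℝ) (ha : a = 1 / (k * r ^ 2)) :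
    ¬ (∀ i t j l m s : Fin n,
      -(1 / (2 * r ^ 2)) *
        (g⁻¹ j l * (g t m * (if s = i then (1:ℝ) else 0)
            - g i m * (if s = t then (1:ℝ) else 0)
            + 2 * g i t * (if s = m then (1:ℝ) else 0))
          + g i t * (g⁻¹ j s * (if l = m then (1:ℝ) else 0)
            - g⁻¹ l s * (if j = m then (1:ℝ) else 0)))
      + (1 / r ^ 4) * (if s = m then (1:ℝ) else 0)
          * (if l = t then (1:ℝ) else 0) * (if j = i then (1:ℝ) else 0) = 0) :=
  stmt13_general n hn g hg r hr
end

section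
/- Suppose α₁, α₂, α₃, α₄ are real constants, n ≥ 2, g is a positive definite metric on ℝⁿ, and for all (1,1)-tensors t in a nonempty open subset of ℝ^{n×n}, the identity α₁ g_{ti} g^{lj} δ^m_r δ^v_n + α₂ g_{ni} g^{mj} δ^l_r δ^v_t + α₃ t̄^m_n t̄^j_i δ^l_r δ^v_t + α₄ t̄^l_t t̄^j_i δ^m_r δ^v_n = 0 holds for all indices, where t̄^j_i = g^{jh} g_{ik} t^k_h. Then the four expressions g_{ti}g^{lj}δ^m_rδ^v_n, g_{ni}g^{mj}δ^l_rδ^v_t, t̄^m_n t̄^j_i δ^l_rδ^v_t, t̄^l_t t̄^j_i δ^m_rδ^v_n are linearly independent as functions of (t, indices), i.e., α₁ = α₂ = α₃ = α₄ = 0. -/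
/-!
Choosing `m ≠ r`, `l = r`, `v = t'`, `j = m`, `i = n'` kills the `α₁`, `α₄` terms and leaves
`α₂ g_{ii} g^{mm} + α₃ (t̄^m_i)² = 0` on `U`; symmetrically for `α₁`, `α₄`. Since `t ↦ t̄^m_i` is a
nonzero linear form (`t̄ = g⁻¹ tᵀ gᵀ` with `g` invertible), restricting to a short line segment in `U`
along which it grows with unit speed forces both coefficients to vanish, and `g_{ii} g^{mm} > 0`.
-/

/-- Kronecker delta. -/
def kdelta {n : ℕ} (i j : Fin n) : ℝ := if i = j then 1 else 0

/-- `t̄^j_i = g^{jh} g_{ik} t^k_h`. -/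
noncomputable def tbar {n : ℕ} (g : Matrix (Fin n) (Fin n) ℝ) (t : Matrix (Fin n) (Fin n) ℝ)
    (j i : Fin n) : ℝ :=
  ∑ h : Fin n, ∑ k : Fin n, g⁻¹ j h * g i k * t k h

open Matrix

lemma eq_zero_of_forall_mem_isOpen_add_mul_sq_eq_zero {E : Type*} [AddCommGroup E] [Module ℝ E]
    [TopologicalSpace E] [ContinuousAdd E] [ContinuousSMul ℝ E]
    {U : Set E} (hU : IsOpen U) (hne : U.Nonempty) {L : E →ₗ[ℝ] ℝ} (hL : L ≠ 0) {c β : ℝ}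
    (h : ∀ x ∈ U, c + β * L x ^ 2 = 0) : c = 0 ∧ β = 0 := by
  obtain ⟨x₀, hx₀⟩ := hne
  obtain ⟨A, hA⟩ : ∃ A, L A = 1 := by
    obtain ⟨B, hB⟩ : ∃ B, L B ≠ 0 := by
      by_contra! hB; exact hL (LinearMap.ext hB)
    exact ⟨(L B)⁻¹ • B, by simp [hB]⟩
  have hline : Continuous fun s : ℝ => x₀ + s • A := by fun_prop
  obtain ⟨ε, hε, hball⟩ := Metric.isOpen_iff.mp (hU.preimage hline) 0 (by simpa using hx₀)
  have hval : ∀ s, |s| < ε → c + β * (L x₀ + s) ^ 2 = 0 := fun s hs => by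
    simpa [hA] using h _ (hball (by simpa using hs))
  have h₀ := hval 0 (by simpa using hε)
  have hpos := hval (ε / 2) (by rw [abs_of_pos (by positivity)]; linarith)
  have hneg := hval (-(ε / 2)) (by rw [abs_neg, abs_of_pos (by positivity)]; linarith)
  have hβ : β = 0 := by
    have : β * (ε / 2) ^ 2 = 0 := by linear_combination (hpos + hneg - 2 * h₀) / 2
    simpa [hε.ne'] using this
  exact ⟨by simpa [hβ] using h₀, hβ⟩

lemma tbar_eq_mul {n : ℕ} (g t : Matrix (Fin n) (Fin n) ℝ) (j i : Fin n) :
    tbar g t j i = (g⁻¹ * tᵀ * gᵀ) j i := by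
  simp only [tbar, Matrix.mul_apply, Matrix.transpose_apply, Finset.sum_mul]
  rw [Finset.sum_comm]
  refine Finset.sum_congr rfl fun h _ => Finset.sum_congr rfl fun k _ => by ring

noncomputable def tbarLinearMap {n : ℕ} (g : Matrix (Fin n) (Fin n) ℝ) (j i : Fin n) :
    Matrix (Fin n) (Fin n) ℝ →ₗ[ℝ] ℝ where
  toFun t := tbar g t j i
  map_add' t s := by
    simp only [tbar_eq_mul, transpose_add, Matrix.mul_add, Matrix.add_mul, Matrix.add_apply]
  map_smul' a t := by
    simp only [tbar_eq_mul, transpose_smul, Matrix.mul_smul, Matrix.smul_mul, Matrix.smul_apply,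
      smul_eq_mul, RingHom.id_apply]

lemma tbarLinearMap_ne_zero {n : ℕ} {g : Matrix (Fin n) (Fin n) ℝ} (hg : IsUnit g.det)
    (j i : Fin n) : tbarLinearMap g j i ≠ 0 := by
  intro h0
  have := LinearMap.congr_fun h0 (g * single j i 1 * gᵀ⁻¹)ᵀ
  have hgT : IsUnit gᵀ.det := by rwa [det_transpose]
  simp only [tbarLinearMap, LinearMap.coe_mk, AddHom.coe_mk, tbar_eq_mul, transpose_transpose,
    LinearMap.zero_apply] at this
  rw [Matrix.mul_assoc, Matrix.mul_assoc, Matrix.nonsing_inv_mul _ hgT, Matrix.mul_one,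
    ← Matrix.mul_assoc, Matrix.nonsing_inv_mul _ hg, Matrix.one_mul] at this
  simp at this

/-- Lemma 1 in full index form: if the identity
`α₁ g_{ti} g^{lj} δ^m_r δ^v_n + α₂ g_{ni} g^{mj} δ^l_r δ^v_t
  + α₃ t̄^m_n t̄^j_i δ^l_r δ^v_t + α₄ t̄^l_t t̄^j_i δ^m_r δ^v_n = 0`
holds for all `t` in a nonempty open set and all indices, then
`α₁ = α₂ = α₃ = α₄ = 0`. -/
theorem stmt14 (n : ℕ) (hn : 2 ≤ n)
    (g : Matrix (Fin n) (Fin n) ℝ) (hg : g.PosDef)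
    (α₁ α₂ α₃ α₄ : ℝ)
    (U : Set (Matrix (Fin n) (Fin n) ℝ)) (hU : IsOpen U) (hne : U.Nonempty)
    (h : ∀ t ∈ U, ∀ t' i l j m r v n' : Fin n,
      α₁ * g t' i * g⁻¹ l j * kdelta m r * kdelta v n'
        + α₂ * g n' i * g⁻¹ m j * kdelta l r * kdelta v t'
        + α₃ * tbar g t m n' * tbar g t j i * kdelta l r * kdelta v t'
        + α₄ * tbar g t l t' * tbar g t j i * kdelta m r * kdelta v n' = 0) :
    α₁ = 0 ∧ α₂ = 0 ∧ α₃ = 0 ∧ α₄ = 0 := by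
  obtain ⟨p, q, hpq⟩ := Fintype.exists_pair_of_one_lt_card (α := Fin n)
    (by rw [Fintype.card_fin]; omega)
  have hL := tbarLinearMap_ne_zero (isUnit_iff_ne_zero.mpr hg.det_pos.ne') q p
  have hgg : g p p * g⁻¹ q q ≠ 0 := (mul_pos hg.diag_pos hg.inv.diag_pos).ne'
  obtain ⟨h₂, h₃⟩ := eq_zero_of_forall_mem_isOpen_add_mul_sq_eq_zero hU hne hL
    (c := α₂ * (g p p * g⁻¹ q q)) (β := α₃) fun t ht => by
      simpa [kdelta, hpq.symm, tbarLinearMap, sq, mul_assoc] using h t ht p p p q q p p p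
  obtain ⟨h₁, h₄⟩ := eq_zero_of_forall_mem_isOpen_add_mul_sq_eq_zero hU hne hL
    (c := α₁ * (g p p * g⁻¹ q q)) (β := α₄) fun t ht => by
      simpa [kdelta, hpq.symm, tbarLinearMap, sq, mul_assoc] using h t ht p p q q p p p p
  exact ⟨(mul_eq_zero.mp h₁).resolve_right hgg, (mul_eq_zero.mp h₂).resolve_right hgg, h₃, h₄⟩
end
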